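/- Let X and Y be connected finite simple graphs that are degree similar, and assume X is regular (all vertices of X have the same degree). Then for any finite simple graph H, the joins X ∨ H and Y ∨ H are degree similar. -/

import Mathlib

open Matrix

open Classical in
noncomputable def adjMat {V : Type*} (G : SimpleGraph V) : Matrix V V ℝ :=
  Matrix.of fun a b => if G.Adj a b then 1 else 0

noncomputable def gdeg {V : Type*} (G : SimpleGraph V) (v : V) : ℕ :=
  Nat.card (G.neighborSet v)

noncomputable def degMat {V : Type*} [DecidableEq V] (G : SimpleGraph V) : Matrix V V ℝ :=
  Matrix.diagonal fun v => (gdeg G v : ℝ)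

/-- Two graphs (on possibly different vertex types of the same cardinality) are
degree similar if there is an invertible real matrix conjugating the adjacency
matrix of the first to that of the second, and likewise for the degree matrices. -/
def DegreeSimilar {V W : Type*} [Fintype V] [Fintype W] [DecidableEq V] [DecidableEq W]
    (G : SimpleGraph V) (H : SimpleGraph W) : Prop :=
  ∃ (e : V ≃ W) (M : Matrix V V ℝ), IsUnit M ∧
    M⁻¹ * adjMat G * M = (adjMat H).submatrix ⇑e ⇑e ∧
    M⁻¹ * degMat G * M = (degMat H).submatrix ⇑e ⇑e

/-- The join of two graphs: the disjoint union together with all edges between them. -/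
def joinG {V W : Type*} (G : SimpleGraph V) (H : SimpleGraph W) :
    SimpleGraph (V ⊕ W) :=
  SimpleGraph.fromRel fun a b =>
    match a, b with
    | Sum.inl a, Sum.inl b => G.Adj a b
    | Sum.inr a, Sum.inr b => H.Adj a b
    | _, _ => True


/-!
Since `X` is `r`-regular, `D(X) = r • 1`, so `D(Y)` is the same scalar matrix and the all-ones
vector `𝟙` satisfies `A(Y) 𝟙 = r 𝟙`. The relation `A(X) M = M A(Y)` then makes `M 𝟙` an
eigenvector of `A(X)` for `r`, i.e. a vector in the kernel of the Laplacian of `X`, which is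
constant (`M 𝟙 = c 𝟙`) because `X` is connected. The transposed argument applied to
`M⁻¹ A(X) = A(Y) M⁻¹` gives `𝟙ᵀ M⁻¹ = d 𝟙ᵀ`, and evaluating `𝟙ᵀ M⁻¹ M 𝟙` shows `d c = 1`, hence
`𝟙ᵀ M = c 𝟙ᵀ`. So `M` acts on all-ones blocks by the scalar `c ≠ 0` from both sides, and the
block-diagonal matrix `M ⊕ c • 1` conjugates the adjacency and degree matrices of `X ∨ H` to those
of `Y ∨ H`.
-/

open SimpleGraph

namespace Matrix

theorem inv_mul_mul_eq_iff {n R : Type*} [Fintype n] [DecidableEq n] [CommRing R]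
    {N : Matrix n n R} (hN : IsUnit N) {A B : Matrix n n R} :
    N⁻¹ * A * N = B ↔ A * N = N * B := by
  have := hN.invertible
  rw [Matrix.mul_assoc, inv_mul_eq_iff_eq_mul_of_invertible]

theorem fromBlocks_submatrix_sumCongr {l m n o l' m' n' o' α : Type*}
    (A : Matrix n l α) (B : Matrix n m α) (C : Matrix o l α) (D : Matrix o m α)
    (f : n' ≃ n) (g : o' ≃ o) (h : l' ≃ l) (k : m' ≃ m) :
    (fromBlocks A B C D).submatrix (f.sumCongr g) (h.sumCongr k) =
      fromBlocks (A.submatrix f h) (B.submatrix f k) (C.submatrix g h) (D.submatrix g k) := by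
  ext (a | a) (b | b) <;> rfl

variable {m n R : Type*} [CommSemiring R]

theorem mul_of_one_eq_smul [Fintype n] {M : Matrix m n R} {c : R} (hM : M *ᵥ 1 = c • 1)
    (o : Type*) : M * (of fun _ _ => 1 : Matrix n o R) = c • of fun _ _ => 1 := by
  ext i j
  simpa [mul_apply, mulVec, dotProduct] using congrFun hM i

theorem of_one_mul_eq_smul [Fintype m] {M : Matrix m n R} {c : R} (hM : 1 ᵥ* M = c • 1)
    (o : Type*) : (of fun _ _ => 1 : Matrix o m R) * M = c • of fun _ _ => 1 := by
  ext i j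
  simpa [mul_apply, vecMul, dotProduct] using congrFun hM j

theorem vecMul_one_eq_smul_of_mulVec_one_eq_smul {K : Type*} [Field K] [CharZero K]
    [Fintype n] [DecidableEq n] [Nonempty n] {M : Matrix n n K} (hM : IsUnit M) {c d : K}
    (hMc : M *ᵥ 1 = c • 1) (hdM : 1 ᵥ* M⁻¹ = d • 1) : c ≠ 0 ∧ 1 ᵥ* M = c • 1 := by
  have hM' := (isUnit_iff_isUnit_det M).1 hM
  have hdc : d * c = 1 := by
    have hcard : (1 : n → K) ⬝ᵥ 1 ≠ 0 := by simp
    refine mul_right_cancel₀ hcard ?_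
    calc d * c * (1 ⬝ᵥ 1) = (1 ᵥ* M⁻¹) ⬝ᵥ (M *ᵥ 1) := by
          rw [hdM, hMc, smul_dotProduct, dotProduct_smul, smul_smul, smul_eq_mul]
      _ = 1 * (1 ⬝ᵥ 1) := by
          rw [← dotProduct_mulVec, mulVec_mulVec, nonsing_inv_mul M hM', one_mulVec, one_mul]
  refine ⟨right_ne_zero_of_mul_eq_one hdc, ?_⟩
  calc 1 ᵥ* M = (c * d) • 1 ᵥ* M := by rw [mul_comm, hdc, one_smul]
    _ = c • 1 := by
      rw [← smul_smul, ← smul_vecMul, ← hdM, vecMul_vecMul, nonsing_inv_mul M hM', vecMul_one]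

end Matrix

section

variable {V W : Type*}

theorem adjMat_eq_adjMatrix (G : SimpleGraph V) [DecidableRel G.Adj] :
    adjMat G = G.adjMatrix ℝ := by
  ext a b
  simp only [adjMat, of_apply, adjMatrix_apply]
  congr

theorem adjMat_transpose (G : SimpleGraph V) : (adjMat G)ᵀ = adjMat G := by
  classical
  rw [adjMat_eq_adjMatrix, transpose_adjMatrix]

theorem gdeg_eq_degree [Fintype V] (G : SimpleGraph V) [DecidableRel G.Adj] (v : V) :
    gdeg G v = G.degree v := by
  rw [gdeg, Nat.card_eq_fintype_card, card_neighborSet_eq_degree]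

theorem degMat_eq_degMatrix [Fintype V] [DecidableEq V] (G : SimpleGraph V) [DecidableRel G.Adj] :
    degMat G = G.degMatrix ℝ := by
  simp only [degMat, degMatrix, gdeg_eq_degree]

theorem adjMat_mulVec_one [Fintype V] (G : SimpleGraph V) :
    adjMat G *ᵥ 1 = fun v => (gdeg G v : ℝ) := by
  classical
  ext v
  simp [adjMat_eq_adjMatrix, gdeg_eq_degree]

theorem adjMat_submatrix_mulVec_one [Fintype V] [DecidableEq V] {V' : Type*} [Fintype V']
    (G : SimpleGraph V) (e : V' ≃ V) :
    (adjMat G).submatrix e e *ᵥ 1 = (degMat G).submatrix e e *ᵥ 1 := by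
  rw [submatrix_mulVec_equiv, submatrix_mulVec_equiv, Pi.one_comp, adjMat_mulVec_one]
  ext v
  simp [degMat, mulVec_diagonal]

section joinG

variable (G : SimpleGraph V) (H : SimpleGraph W)

@[simp]
theorem joinG_adj_inl_inl (a b : V) : (joinG G H).Adj (.inl a) (.inl b) ↔ G.Adj a b := by
  simp only [joinG, fromRel_adj, ne_eq, Sum.inl.injEq, G.adj_comm b a, or_self,
    and_iff_right_iff_imp]
  exact G.ne_of_adj

@[simp]
theorem joinG_adj_inr_inr (a b : W) : (joinG G H).Adj (.inr a) (.inr b) ↔ H.Adj a b := by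
  simp only [joinG, fromRel_adj, ne_eq, Sum.inr.injEq, H.adj_comm b a, or_self,
    and_iff_right_iff_imp]
  exact H.ne_of_adj

@[simp]
theorem joinG_adj_inl_inr (a : V) (b : W) : (joinG G H).Adj (.inl a) (.inr b) := by
  simp [joinG]

@[simp]
theorem joinG_adj_inr_inl (a : W) (b : V) : (joinG G H).Adj (.inr a) (.inl b) := by
  simp [joinG]

theorem adjMat_joinG :
    adjMat (joinG G H) = fromBlocks (adjMat G) (of fun _ _ => 1) (of fun _ _ => 1) (adjMat H) := by
  ext (a | a) (b | b) <;> simp only [adjMat, of_apply, fromBlocks_apply₁₁, fromBlocks_apply₁₂,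
    fromBlocks_apply₂₁, fromBlocks_apply₂₂] <;> split_ifs <;> simp_all

theorem degMat_joinG [Fintype V] [Fintype W] [DecidableEq V] [DecidableEq W] :
    degMat (joinG G H) = fromBlocks (degMat G + (Fintype.card W : ℝ) • 1) 0 0
      (degMat H + (Fintype.card V : ℝ) • 1) := by
  have hdeg : (fun x => (gdeg (joinG G H) x : ℝ)) =
      Sum.elim (fun v => gdeg G v + (Fintype.card W : ℝ))
        (fun w => gdeg H w + (Fintype.card V : ℝ)) := by
    rw [← adjMat_mulVec_one, adjMat_joinG, ← Sum.elim_one_one, fromBlocks_mulVec,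
      Sum.elim_comp_inl, Sum.elim_comp_inr, adjMat_mulVec_one, adjMat_mulVec_one]
    ext (v | w) <;> simp [mulVec, dotProduct, add_comm]
  rw [degMat, hdeg, smul_one_eq_diagonal, smul_one_eq_diagonal, degMat, degMat, diagonal_add,
    diagonal_add, fromBlocks_diagonal]

end joinG

section Eigenvector

variable [Fintype V] [DecidableEq V] {G : SimpleGraph V} {r : ℝ} {P B : Matrix V V ℝ}

theorem eq_of_adjMat_mulVec_eq_smul (hG : G.Connected) (hreg : degMat G = r • 1) {x : V → ℝ}
    (hx : adjMat G *ᵥ x = r • x) (i j : V) : x i = x j := by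
  classical
  have hlap : G.lapMatrix ℝ *ᵥ x = 0 := by
    rw [lapMatrix, sub_mulVec, ← adjMat_eq_adjMatrix, ← degMat_eq_degMatrix, hreg, hx,
      smul_mulVec, one_mulVec, sub_self]
  exact (lapMatrix_mulVec_eq_zero_iff_forall_reachable G).1 hlap i j (hG.preconnected i j)

theorem exists_mulVec_one_eq_smul_of_adjMat_mul_eq (hG : G.Connected) (hreg : degMat G = r • 1)
    (hP : adjMat G * P = P * B) (hB : B *ᵥ 1 = r • 1) : ∃ c : ℝ, P *ᵥ 1 = c • 1 := by
  obtain ⟨v₀⟩ := hG.nonempty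
  have hx : adjMat G *ᵥ (P *ᵥ 1) = r • (P *ᵥ 1) := by
    rw [mulVec_mulVec, hP, ← mulVec_mulVec, hB, mulVec_smul]
  exact ⟨(P *ᵥ 1) v₀, funext fun i => by
    simpa using eq_of_adjMat_mulVec_eq_smul hG hreg hx i v₀⟩

theorem exists_vecMul_one_eq_smul_of_mul_adjMat_eq (hG : G.Connected) (hreg : degMat G = r • 1)
    (hP : P * adjMat G = B * P) (hB : 1 ᵥ* B = r • 1) : ∃ c : ℝ, 1 ᵥ* P = c • 1 := by
  have hPt : adjMat G * Pᵀ = Pᵀ * Bᵀ := by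
    rw [← adjMat_transpose, ← transpose_mul, hP, transpose_mul]
  simp_rw [← mulVec_transpose] at hB ⊢
  exact exists_mulVec_one_eq_smul_of_adjMat_mul_eq hG hreg hPt hB

end Eigenvector

end

theorem degreeSimilar_joinG_of_mul_eq {V V' W : Type*} [Fintype V] [Fintype V'] [Fintype W]
    [DecidableEq V] [DecidableEq V'] [DecidableEq W] {X : SimpleGraph V} {Y : SimpleGraph V'}
    (e : V ≃ V') {M : Matrix V V ℝ} (hM : IsUnit M)
    (hA : adjMat X * M = M * (adjMat Y).submatrix e e)
    (hD : degMat X * M = M * (degMat Y).submatrix e e)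
    {c : ℝ} (hc : c ≠ 0) (hMc : M *ᵥ 1 = c • 1) (hcM : 1 ᵥ* M = c • 1) (H : SimpleGraph W) :
    DegreeSimilar (joinG X H) (joinG Y H) := by
  set N : Matrix (V ⊕ W) (V ⊕ W) ℝ := fromBlocks M 0 0 (c • 1)
  have hN : IsUnit N := by
    rw [isUnit_iff_isUnit_det, det_fromBlocks_zero₂₁, det_smul, det_one, mul_one]
    exact ((isUnit_iff_isUnit_det M).1 hM).mul (pow_ne_zero _ hc).isUnit
  have hJ : (of fun _ _ => 1 : Matrix V' W ℝ).submatrix e id = of fun _ _ => 1 := rfl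
  have hJ' : (of fun _ _ => 1 : Matrix W V' ℝ).submatrix id e = of fun _ _ => 1 := rfl
  refine ⟨e.sumCongr (Equiv.refl W), N, hN, ?_, ?_⟩ <;> rw [inv_mul_mul_eq_iff hN]
  · rw [adjMat_joinG, adjMat_joinG, fromBlocks_submatrix_sumCongr, fromBlocks_multiply,
      fromBlocks_multiply]
    simp [hA, hJ, hJ', mul_of_one_eq_smul hMc, of_one_mul_eq_smul hcM]
  · rw [degMat_joinG, degMat_joinG, fromBlocks_submatrix_sumCongr, fromBlocks_multiply,
      fromBlocks_multiply]
    simp [add_mul, mul_add, hD, Fintype.card_congr e, submatrix_add, submatrix_smul,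
      submatrix_one_equiv, smul_comm c]

theorem degreeSimilar_join_general {V W : Type*} [Fintype V] [Fintype W]
    [DecidableEq V] [DecidableEq W]
    (X Y : SimpleGraph V) (hX : X.Connected)
    (hreg : ∃ r, ∀ v : V, gdeg X v = r)
    (h : DegreeSimilar X Y) (H : SimpleGraph W) :
    DegreeSimilar (joinG X H) (joinG Y H) := by
  obtain ⟨r, hr⟩ := hreg
  obtain ⟨e, M, hM, hA, hD⟩ := h
  have : Nonempty V := hX.nonempty
  have hMdet := (isUnit_iff_isUnit_det M).1 hM
  set B := (adjMat Y).submatrix e e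
  have hDX : degMat X = (r : ℝ) • 1 := by simp [degMat, hr, smul_one_eq_diagonal]
  have hB : B *ᵥ 1 = (r : ℝ) • 1 := by
    rw [adjMat_submatrix_mulVec_one, ← hD, hDX, Matrix.mul_smul, Matrix.mul_one, smul_mul,
      nonsing_inv_mul M hMdet, smul_mulVec, one_mulVec]
  have hB' : 1 ᵥ* B = (r : ℝ) • 1 := by
    rw [← mulVec_transpose, transpose_submatrix, adjMat_transpose, hB]
  have hAinv : M⁻¹ * adjMat X = B * M⁻¹ := by
    rw [← hA, Matrix.mul_assoc _ M, mul_nonsing_inv M hMdet, Matrix.mul_one]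
  rw [inv_mul_mul_eq_iff hM] at hA hD
  obtain ⟨c, hMc⟩ := exists_mulVec_one_eq_smul_of_adjMat_mul_eq hX hDX hA hB
  obtain ⟨d, hdM⟩ := exists_vecMul_one_eq_smul_of_mul_adjMat_eq hX hDX hAinv hB'
  obtain ⟨hc, hcM⟩ := vecMul_one_eq_smul_of_mulVec_one_eq_smul hM hMc hdM
  exact degreeSimilar_joinG_of_mul_eq e hM hA hD hc hMc hcM H

/-- If `X` and `Y` are connected degree-similar graphs and `X` is regular,
then for any graph `H` the joins `X ∨ H` and `Y ∨ H` are degree similar. -/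
theorem degreeSimilar_join {V W : Type*} [Fintype V] [Fintype W]
    [DecidableEq V] [DecidableEq W]
    (X Y : SimpleGraph V) (hX : X.Connected) (hY : Y.Connected)
    (hreg : ∃ r, ∀ v : V, gdeg X v = r)
    (h : DegreeSimilar X Y) (H : SimpleGraph W) :
    DegreeSimilar (joinG X H) (joinG Y H) :=
  degreeSimilar_join_general X Y hX hreg h H
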